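/- Removable singularity and maximum principle with o(log) growth: Let D ⊂ ℂ be a bounded domain (open and connected) with 0 ∈ D. Let u be continuous on (closure of D) \ {0} and subharmonic on D \ {0}, with u(z) ≤ 0 for every z ∈ ∂D, and suppose u(z) = o(log(1/|z|)) as z → 0, i.e. u(z)/log(1/|z|) → 0. Then u(z) ≤ 0 for all z ∈ D \ {0}; moreover, if u(z₀) = 0 for some z₀ ∈ D \ {0}, then u ≡ 0 on D \ {0}. -/

import Mathlib

/-!
Compare `u` with `ε log (R / |z|)`, where `closure D ⊆ closedBall 0 R` and `R ≥ 1`. Since `log |z|`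
is harmonic away from `0`, `u - ε log (R / |z|)` is subharmonic on `D` minus a small closed disk
around `0`. It is nonpositive on `∂D` because `|z| ≤ R` there, and nonpositive on the small circle
once its radius is small enough, by the `o(log)` growth. The weak maximum principle then gives
`u ≤ ε log (R / |z|)`, and `ε → 0` gives `u ≤ 0`. The equality case is the strong maximum principle
on `D \ {0}`, which is connected because removing a point from an open connected planar set does
not disconnect it.
-/

open Complex Metric Set Filter

/-- A continuous function `u` on an open set `U ⊆ ℂ` is subharmonic if it satisfies the
sub-mean-value inequality on every closed disk contained in `U`. -/
def SubharmonicOn (u : ℂ → ℝ) (U : Set ℂ) : Prop :=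
  ContinuousOn u U ∧ ∀ (z : ℂ) (r : ℝ), 0 < r → Metric.closedBall z r ⊆ U →
    u z ≤ (2 * Real.pi)⁻¹ *
      ∫ t in (0:ℝ)..(2 * Real.pi), u (z + (r : ℂ) * Complex.exp (Complex.I * t))

open Topology InnerProductSpace
open Real (circleAverage)

theorem circleAverage_lt_of_le_of_exists_lt {f : ℂ → ℝ} {c : ℂ} {R a : ℝ}
    (hf : ContinuousOn f (sphere c |R|)) (hle : ∀ x ∈ sphere c |R|, f x ≤ a)
    (hlt : ∃ x ∈ sphere c |R|, f x < a) : circleAverage f c R < a := by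
  rw [← image_circleMap_Ioc] at hlt
  obtain ⟨_, ⟨θ₀, hθ₀, rfl⟩, hθ₀lt⟩ := hlt
  rw [← Real.circleAverage_const a c R, Real.circleAverage_def, Real.circleAverage_def, smul_eq_mul,
    smul_eq_mul, mul_lt_mul_iff_right₀ (inv_pos.2 Real.two_pi_pos)]
  exact intervalIntegral.integral_lt_integral_of_continuousOn_of_le_of_exists_lt Real.two_pi_pos
    (hf.comp (continuous_circleMap c R).continuousOn fun θ _ ↦ circleMap_mem_sphere' c R θ)
    continuousOn_const (fun θ _ ↦ hle _ (circleMap_mem_sphere' c R θ))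
    ⟨θ₀, Ioc_subset_Icc_self hθ₀, hθ₀lt⟩

theorem eqOn_sphere_of_le_circleAverage {f : ℂ → ℝ} {c : ℂ} {R a : ℝ}
    (hf : ContinuousOn f (sphere c |R|)) (hle : ∀ x ∈ sphere c |R|, f x ≤ a)
    (ha : a ≤ circleAverage f c R) : ∀ x ∈ sphere c |R|, f x = a := by
  by_contra! h
  obtain ⟨x, hx, hne⟩ := h
  exact (circleAverage_lt_of_le_of_exists_lt hf hle ⟨x, hx, (hle x hx).lt_of_ne hne⟩).not_ge ha

theorem harmonicOnNhd_log_norm : HarmonicOnNhd (fun z : ℂ ↦ Real.log ‖z‖) {0}ᶜ :=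
  fun _ hz ↦ analyticAt_id.harmonicAt_log_norm hz

theorem IsPreconnected.diff_singleton_of_isPreconnected_diff {X : Type*} [TopologicalSpace X]
    [T1Space X] {D B : Set X} {x : X} (hD : IsPreconnected D) (hDo : IsOpen D) (hBo : IsOpen B)
    (hBD : B ⊆ D) (hxB : x ∈ B) (hB : IsPreconnected (B \ {x})) : IsPreconnected (D \ {x}) := by
  -- A separation of `D \ {x}` leaves `B \ {x}` on one side; adding `B` to that side separates `D`.
  rw [isPreconnected_iff_subset_of_disjoint] at hD hB ⊢
  intro u v hu hv hcover hdisj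
  have hWo : IsOpen (D \ {x}) := hDo.sdiff isClosed_singleton
  have hBW : B \ {x} ⊆ D \ {x} := sdiff_subset_sdiff_left hBD
  wlog hBu : B \ {x} ⊆ u generalizing u v
  · have hBv := (hB u v hu hv (hBW.trans hcover)
      (subset_empty_iff.1 (hdisj ▸ inter_subset_inter_left _ hBW))).resolve_left hBu
    exact (this v u hv hu (by rwa [union_comm]) (by rwa [inter_comm v]) hBv).symm
  refine (hD ((D \ {x}) ∩ u ∪ B) ((D \ {x}) ∩ v) ((hWo.inter hu).union hBo) (hWo.inter hv)
    ?_ ?_).imp (fun h y hy ↦ ?_) fun h y hy ↦ (h hy.1).2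
  · intro y hy
    by_cases hyx : y = x
    · exact Or.inl (Or.inr (hyx ▸ hxB))
    · exact (hcover ⟨hy, hyx⟩).imp (fun h ↦ Or.inl ⟨⟨hy, hyx⟩, h⟩) fun h ↦ ⟨⟨hy, hyx⟩, h⟩
  · refine subset_empty_iff.1 fun y ⟨hyD, hyuB, hyW, hyv⟩ ↦ ?_
    have hyu : y ∈ u := hyuB.elim (·.2) fun hyB ↦ hBu ⟨hyB, hyW.2⟩
    exact hdisj.subset ⟨hyW, hyu, hyv⟩
  · exact (h hy.1).elim (·.2) fun hyB ↦ hBu ⟨hyB, hy.2⟩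

theorem isPreconnected_ball_diff_center (c : ℂ) (ρ : ℝ) : IsPreconnected (ball c ρ \ {c}) := by
  have hpolar : ball c ρ \ {c} = (fun p : ℝ × ℝ ↦ circleMap c p.1 p.2) '' (Ioo 0 ρ ×ˢ univ) := by
    ext x
    constructor
    · rintro ⟨hx, hxc⟩
      refine ⟨(‖x - c‖, arg (x - c)), ⟨⟨norm_pos_iff.2 (sub_ne_zero.2 hxc), ?_⟩, mem_univ _⟩, ?_⟩
      · rwa [← dist_eq_norm]
      · simp [circleMap, norm_mul_exp_arg_mul_I]
    · rintro ⟨⟨t, θ⟩, ⟨⟨ht0, htρ⟩, -⟩, rfl⟩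
      refine ⟨?_, circleMap_ne_center ht0.ne'⟩
      rw [mem_ball, ← mem_sphere.1 (circleMap_mem_sphere c ht0.le θ)] at *
      exact htρ
  rw [hpolar]
  exact (isPreconnected_Ioo.prod isPreconnected_univ).image _
    (by fun_prop : Continuous fun p : ℝ × ℝ ↦ circleMap c p.1 p.2).continuousOn

theorem IsOpen.isPreconnected_diff_singleton {D : Set ℂ} (hDo : IsOpen D) (hD : IsPreconnected D)
    (c : ℂ) : IsPreconnected (D \ {c}) := by
  by_cases hc : c ∈ D
  · obtain ⟨ρ, hρ, hρD⟩ := Metric.isOpen_iff.1 hDo c hc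
    exact hD.diff_singleton_of_isPreconnected_diff hDo isOpen_ball hρD (mem_ball_self hρ)
      (isPreconnected_ball_diff_center c ρ)
  · rwa [sdiff_singleton_eq_self hc]

theorem circleAverage_eq_integral (f : ℂ → ℝ) (c : ℂ) (R : ℝ) :
    circleAverage f c R = (2 * Real.pi)⁻¹ *
      ∫ t in (0:ℝ)..(2 * Real.pi), f (c + (R : ℂ) * Complex.exp (Complex.I * t)) := by
  simp only [Real.circleAverage_def, circleMap, smul_eq_mul, mul_comm _ I]

theorem subharmonicOn_iff {u : ℂ → ℝ} {U : Set ℂ} :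
    SubharmonicOn u U ↔ ContinuousOn u U ∧
      ∀ z r, 0 < r → closedBall z r ⊆ U → u z ≤ circleAverage u z r := by
  simp only [SubharmonicOn, circleAverage_eq_integral]

namespace SubharmonicOn

variable {u : ℂ → ℝ} {U : Set ℂ}

theorem le_circleAverage (hu : SubharmonicOn u U) {z : ℂ} {r : ℝ} (hr : 0 < r)
    (hball : closedBall z r ⊆ U) : u z ≤ circleAverage u z r :=
  (subharmonicOn_iff.1 hu).2 z r hr hball

theorem mono (hu : SubharmonicOn u U) {V : Set ℂ} (hVU : V ⊆ U) : SubharmonicOn u V :=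
  ⟨hu.1.mono hVU, fun z r hr hball ↦ hu.2 z r hr (hball.trans hVU)⟩

theorem add_harmonicOnNhd (hu : SubharmonicOn u U) {h : ℂ → ℝ} (hh : HarmonicOnNhd h U) :
    SubharmonicOn (u + h) U := by
  refine subharmonicOn_iff.2 ⟨hu.1.add hh.continuousOn, fun z r hr hball ↦ ?_⟩
  have hball' : closedBall z |r| ⊆ U := by rwa [abs_of_pos hr]
  have hsphere := sphere_subset_closedBall.trans hball'
  rw [Pi.add_apply, Real.circleAverage_add (hu.1.mono hsphere).circleIntegrable'
    (hh.continuousOn.mono hsphere).circleIntegrable', (hh.mono hball').circleAverage_eq]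
  exact add_le_add_left (hu.le_circleAverage hr hball) _

theorem eqOn_closedBall_of_le (hu : SubharmonicOn u U) {z : ℂ} {r : ℝ}
    (hball : closedBall z r ⊆ U) (hle : ∀ x ∈ closedBall z r, u x ≤ u z) :
    ∀ x ∈ closedBall z r, u x = u z := by
  intro x hx
  obtain rfl | hxz := eq_or_ne x z
  · rfl
  have hs : 0 < dist x z := dist_pos.2 hxz
  have hsball : closedBall z (dist x z) ⊆ closedBall z r :=
    closedBall_subset_closedBall (mem_closedBall.1 hx)
  have hsphere : sphere z |dist x z| ⊆ closedBall z r := by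
    rw [abs_of_pos hs]
    exact sphere_subset_closedBall.trans hsball
  exact eqOn_sphere_of_le_circleAverage (hu.1.mono (hsphere.trans hball))
    (fun y hy ↦ hle y (hsphere hy)) (hu.le_circleAverage hs (hsball.trans hball)) x
    (mem_sphere.2 (abs_of_pos hs).symm)

theorem isOpen_setOf_eq_of_le (hU : IsOpen U) (hu : SubharmonicOn u U) {M : ℝ}
    (hM : ∀ x ∈ U, u x ≤ M) : IsOpen {x ∈ U | u x = M} := by
  rw [Metric.isOpen_iff]
  rintro z ⟨hz, rfl⟩
  obtain ⟨r, hr, hrU⟩ := Metric.isOpen_iff.1 hU z hz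
  have hcb : closedBall z (r / 2) ⊆ U := (closedBall_subset_ball (half_lt_self hr)).trans hrU
  refine ⟨r / 2, half_pos hr, fun x hx ↦ ?_⟩
  have hx' := ball_subset_closedBall hx
  exact ⟨hcb hx', hu.eqOn_closedBall_of_le hcb (fun y hy ↦ hM y (hcb hy)) x hx'⟩

theorem eqOn_of_isPreconnected (hU : IsOpen U) (hconn : IsPreconnected U)
    (hu : SubharmonicOn u U) {M : ℝ} (hM : ∀ x ∈ U, u x ≤ M) {z₀ : ℂ} (hz₀ : z₀ ∈ U)
    (hu₀ : u z₀ = M) : ∀ x ∈ U, u x = M := by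
  have hcover : U ⊆ {x ∈ U | u x = M} ∪ (U ∩ u ⁻¹' Iio M) := fun x hx ↦
    (hM x hx).eq_or_lt.imp (⟨hx, ·⟩) (⟨hx, ·⟩)
  have hdisj : U ∩ ({x ∈ U | u x = M} ∩ (U ∩ u ⁻¹' Iio M)) = ∅ :=
    subset_empty_iff.1 fun x ⟨_, ⟨_, hxM⟩, _, hlt⟩ ↦ (hxM ▸ hlt : M < M).false
  rcases isPreconnected_iff_subset_of_disjoint.1 hconn _ _ (hu.isOpen_setOf_eq_of_le hU hM)
    (hu.1.isOpen_inter_preimage hU isOpen_Iio) hcover hdisj with h | h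
  · exact fun x hx ↦ (h hx).2
  · exact absurd (h hz₀).2 (by simp [hu₀])

theorem le_of_forall_frontier_le (hU : IsOpen U) (hUb : Bornology.IsBounded U)
    (hu : SubharmonicOn u U) (hcl : ContinuousOn u (closure U)) {m : ℝ}
    (hfr : ∀ x ∈ frontier U, u x ≤ m) : ∀ x ∈ U, u x ≤ m := by
  -- Otherwise the set where `u` attains its maximum over `closure U` lies in `U` and is clopen in
  -- `ℂ`, hence all of `ℂ`, which is unbounded.
  intro z hz
  obtain ⟨x₀, hx₀, hmax⟩ := hUb.isCompact_closure.exists_isMaxOn ⟨z, subset_closure hz⟩ hcl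
  by_contra! hzm
  have hM : m < u x₀ := hzm.trans_le (hmax (subset_closure hz))
  have hS : {x ∈ U | u x = u x₀} = closure U ∩ u ⁻¹' {u x₀} := by
    refine Subset.antisymm (fun x ⟨hx, hxM⟩ ↦ ⟨subset_closure hx, hxM⟩) fun x ⟨hx, hxM⟩ ↦
      ⟨by_contra fun hxU ↦ ?_, hxM⟩
    have := hfr x (hU.frontier_eq ▸ ⟨hx, hxU⟩)
    rw [mem_preimage, mem_singleton_iff] at hxM
    linarith
  have hclopen : IsClopen {x ∈ U | u x = u x₀} :=
    ⟨hS ▸ hcl.preimage_isClosed_of_isClosed isClosed_closure isClosed_singleton,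
      hu.isOpen_setOf_eq_of_le hU fun x hx ↦ hmax (subset_closure hx)⟩
  have huniv := hclopen.eq_univ (hS ▸ ⟨x₀, hx₀, rfl⟩)
  exact NormedSpace.unbounded_univ ℝ ℂ (hUb.subset fun x _ ↦ (huniv ▸ mem_univ x).1)

end SubharmonicOn

theorem eventually_le_mul_log_one_div_norm {u : ℂ → ℝ} {s : Set ℂ}
    (h : Tendsto (fun z ↦ u z / Real.log (1 / ‖z‖)) (𝓝[s] 0) (𝓝 0)) {ε : ℝ} (hε : 0 < ε) :
    ∀ᶠ z in 𝓝[s] 0, z ≠ 0 → u z ≤ ε * Real.log (1 / ‖z‖) := by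
  filter_upwards [h.eventually (gt_mem_nhds hε),
    nhdsWithin_le_nhds (ball_mem_nhds (0 : ℂ) one_pos)] with z hz hz1 hz0
  have hlog : 0 < Real.log (1 / ‖z‖) :=
    Real.log_pos (one_lt_one_div (norm_pos_iff.2 hz0) (by simpa using hz1))
  exact ((div_lt_iff₀ hlog).1 hz).le

theorem le_mul_log_sub_log_norm_of_sphere_le {D : Set ℂ} (hopen : IsOpen D)
    (hbdd : Bornology.IsBounded D) {u : ℂ → ℝ} (hc : ContinuousOn u (closure D \ {0}))
    (hsub : SubharmonicOn u (D \ {0})) (hbv : ∀ z ∈ frontier D, u z ≤ 0) {R : ℝ}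
    (hR : closure D ⊆ closedBall 0 R) {δ ε : ℝ} (hδ : 0 < δ) (hε : 0 ≤ ε)
    (hsphere : ∀ w ∈ sphere (0 : ℂ) δ, u w ≤ ε * (Real.log R - Real.log δ))
    {z : ℂ} (hz : z ∈ D) (hδz : δ < ‖z‖) : u z ≤ ε * (Real.log R - Real.log ‖z‖) := by
  set U := D ∩ (closedBall 0 δ)ᶜ
  have hUsub : U ⊆ D \ {0} :=
    inter_subset_inter_right _ (compl_subset_compl.2 (by simpa using hδ.le))
  have hclU : closure U ⊆ closure D \ {0} := by
    refine (closure_inter_subset_inter_closure _ _).trans (inter_subset_inter_right _ ?_)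
    rw [closure_compl]
    exact compl_subset_compl.2 (singleton_subset_iff.2
      (ball_subset_interior_closedBall (mem_ball_self hδ)))
  have hfrU : frontier U ⊆ frontier D ∪ sphere 0 δ := by
    refine (frontier_inter_subset _ _).trans (union_subset_union inter_subset_left ?_)
    rw [frontier_compl, frontier_closedBall _ hδ.ne']
    exact inter_subset_right
  set h : ℂ → ℝ := fun w ↦ ε * (Real.log ‖w‖ - Real.log R)
  have hh : HarmonicOnNhd h {0}ᶜ :=
    (harmonicOnNhd_log_norm.sub (harmonicOnNhd_const _)).const_smul (c := ε)
  have hv := (hsub.mono hUsub).add_harmonicOnNhd (hh.mono (hUsub.trans fun _ hx ↦ hx.2))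
  have hvcl : ContinuousOn (u + h) (closure U) :=
    (hc.mono hclU).add (hh.continuousOn.mono (hclU.trans fun _ hx ↦ hx.2))
  have hfr : ∀ w ∈ frontier U, (u + h) w ≤ 0 := by
    intro w hw
    have hw0 : 0 < ‖w‖ := norm_pos_iff.2 (hclU (frontier_subset_closure hw)).2
    simp only [Pi.add_apply, h]
    rcases hfrU hw with hwD | hwδ
    · have hwR : ‖w‖ ≤ R := by simpa using hR (frontier_subset_closure hwD)
      have := Real.log_le_log hw0 hwR
      nlinarith [hbv w hwD]
    · rw [mem_sphere_zero_iff_norm.1 hwδ]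
      linarith [hsphere w hwδ]
  have := hv.le_of_forall_frontier_le (hopen.inter isClosed_closedBall.isOpen_compl)
    (hbdd.subset inter_subset_left) hvcl hfr z ⟨hz, by simpa using hδz⟩
  simp only [Pi.add_apply, h] at this
  linarith

theorem nonpos_of_tendsto_div_log_one_div_norm {D : Set ℂ} (hopen : IsOpen D)
    (hbdd : Bornology.IsBounded D) (h0 : (0 : ℂ) ∈ D) {u : ℂ → ℝ}
    (hc : ContinuousOn u (closure D \ {0})) (hsub : SubharmonicOn u (D \ {0}))
    (hbv : ∀ z ∈ frontier D, u z ≤ 0)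
    (hgrowth : Tendsto (fun z ↦ u z / Real.log (1 / ‖z‖)) (𝓝[D \ {0}] 0) (𝓝 0)) :
    ∀ z ∈ D \ {0}, u z ≤ 0 := by
  rintro z ⟨hzD, hz0⟩
  have hz : 0 < ‖z‖ := norm_pos_iff.2 hz0
  obtain ⟨R₀, hR₀⟩ := hbdd.closure.subset_closedBall 0
  set R := max R₀ 1
  have hR : closure D ⊆ closedBall 0 R :=
    hR₀.trans (closedBall_subset_closedBall (le_max_left _ _))
  have hlogR : 0 ≤ Real.log R := Real.log_nonneg (le_max_right _ _)
  obtain ⟨ρ, hρ, hρD⟩ := Metric.isOpen_iff.1 hopen 0 h0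
  have hbound : ∀ ε > 0, u z ≤ ε * (Real.log R - Real.log ‖z‖) := by
    intro ε hε
    obtain ⟨δ₀, hδ₀, hδ₀u⟩ :=
      Metric.mem_nhdsWithin_iff.1 (eventually_le_mul_log_one_div_norm hgrowth hε)
    set δ := min (min ρ δ₀) ‖z‖ / 2
    have hδ : 0 < δ := by positivity
    have hδlt : δ < min (min ρ δ₀) ‖z‖ := half_lt_self (by positivity)
    refine le_mul_log_sub_log_norm_of_sphere_le hopen hbdd hc hsub hbv hR hδ hε.le
      (fun w hw ↦ ?_) hzD (hδlt.trans_le (min_le_right _ _))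
    have hwδ : ‖w‖ = δ := mem_sphere_zero_iff_norm.1 hw
    have hw0 : w ≠ 0 := norm_pos_iff.1 (hwδ ▸ hδ)
    have hwball : w ∈ ball (0 : ℂ) (min ρ δ₀) :=
      mem_ball_zero_iff.2 (hwδ ▸ hδlt.trans_le (min_le_left _ _))
    have hwu := hδ₀u ⟨ball_subset_ball (min_le_right _ _) hwball,
      hρD (ball_subset_ball (min_le_left _ _) hwball), hw0⟩ hw0
    rw [hwδ, one_div, Real.log_inv] at hwu
    nlinarith [mul_nonneg hε.le hlogR]
  have hlim : Tendsto (fun ε : ℝ ↦ ε * (Real.log R - Real.log ‖z‖)) (𝓝[>] 0) (𝓝 0) := by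
    simpa using tendsto_nhdsWithin_of_tendsto_nhds
      ((continuous_mul_const (Real.log R - Real.log ‖z‖)).tendsto 0)
  exact ge_of_tendsto hlim (eventually_nhdsWithin_of_forall hbound)

/-- **Removable singularity and maximum principle with `o(log)` growth.**  Let `D` be a
bounded domain containing `0`, and let `u` be continuous on `closure D \ {0}`, subharmonic on
`D \ {0}`, nonpositive on `∂D`, and `u(z) = o(log(1/|z|))` as `z → 0`.  Then `u ≤ 0` on
`D \ {0}`, and if `u` vanishes at some point of `D \ {0}` then `u ≡ 0` on `D \ {0}`. -/
theorem max_principle_o_log (D : Set ℂ)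
    (hopen : IsOpen D) (hconn : IsConnected D) (hbdd : Bornology.IsBounded D)
    (h0 : (0:ℂ) ∈ D)
    (u : ℂ → ℝ)
    (hc : ContinuousOn u (closure D \ {0}))
    (hsub : SubharmonicOn u (D \ {0}))
    (hbv : ∀ z ∈ frontier D, u z ≤ 0)
    (hgrowth : Tendsto (fun z : ℂ => u z / Real.log (1 / ‖z‖))
      (nhdsWithin 0 (D \ {0})) (nhds 0)) :
    (∀ z ∈ D \ {0}, u z ≤ 0) ∧
      (∀ z₀ ∈ D \ {0}, u z₀ = 0 → ∀ z ∈ D \ {0}, u z = 0) := by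
  have hle := nonpos_of_tendsto_div_log_one_div_norm hopen hbdd h0 hc hsub hbv hgrowth
  exact ⟨hle, fun z₀ hz₀ hu₀ ↦ hsub.eqOn_of_isPreconnected (hopen.sdiff isClosed_singleton)
    (hopen.isPreconnected_diff_singleton hconn.isPreconnected 0) hle hz₀ hu₀⟩
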